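/- arXiv:math/0205149 — 2 statements merged into one kernel-verified Lean document; each statement's English description precedes it below -/
import Mathlib

section
/- Let G ⊊ SO(n) be a proper closed subgroup with Lie algebra 𝔤 ⊆ 𝔰𝔬(n) and let 𝔪 = 𝔤^⊥ be its orthogonal complement in 𝔰𝔬(n). Then the G-equivariant linear map ℝⁿ → ℝⁿ ⊗ 𝔪 given by X ↦ Σᵢ eᵢ ⊗ pr_𝔪(eᵢ ∧ X) (where e₁,…,eₙ is an orthonormal basis and eᵢ ∧ X denotes the skew-symmetric endomorphism Y ↦ ⟨eᵢ,Y⟩X − ⟨X,Y⟩eᵢ) is injective. Equivalently, ℝⁿ occurs as a subrepresentation of ℝⁿ ⊗ 𝔪. -/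
/-!
If `X ≠ Y` have the same image, then `Z := X - Y` satisfies `eᵢ ∧ Z ∈ 𝔤` for every `i`, because
`v ↦ v - pr_𝔤 v` is linear with kernel `𝔤`. The commutator identity
`[u ∧ Z, v ∧ Z] = ‖Z‖² (u ∧ v) + ⟨u, Z⟩ (v ∧ Z) - ⟨v, Z⟩ (u ∧ Z)` then puts every `eᵢ ∧ eⱼ` in `𝔤`,
and these span the skew matrices, so `𝔤` would be all of `𝔰𝔬(n)`.
-/

noncomputable section

/-- The matrix (indexed as an element of the Euclidean space of `n × n` matrices,
with the Frobenius inner product) of the skew-symmetric endomorphism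
`u ∧ v : Y ↦ ⟨u,Y⟩v − ⟨v,Y⟩u`. -/
def wedgeE {n : ℕ} (u v : EuclideanSpace ℝ (Fin n)) :
    EuclideanSpace ℝ (Fin n × Fin n) :=
  (WithLp.equiv 2 _).symm fun p => v p.1 * u p.2 - u p.1 * v p.2

/-- Matrix multiplication in this model. -/
def mmulE {n : ℕ} (A B : EuclideanSpace ℝ (Fin n × Fin n)) :
    EuclideanSpace ℝ (Fin n × Fin n) :=
  (WithLp.equiv 2 _).symm fun p => ∑ k, A (p.1, k) * B (k, p.2)

@[simp]
lemma wedgeE_apply {n : ℕ} (u v : EuclideanSpace ℝ (Fin n)) (p : Fin n × Fin n) :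
    wedgeE u v p = v p.1 * u p.2 - u p.1 * v p.2 := rfl

@[simp]
lemma mmulE_apply {n : ℕ} (A B : EuclideanSpace ℝ (Fin n × Fin n)) (p : Fin n × Fin n) :
    mmulE A B p = ∑ k, A (p.1, k) * B (k, p.2) := rfl

section

variable {n : ℕ}

open scoped RealInnerProductSpace

lemma wedgeE_sub_right (u X Y : EuclideanSpace ℝ (Fin n)) :
    wedgeE u (X - Y) = wedgeE u X - wedgeE u Y := by
  ext p
  simp only [wedgeE_apply, PiLp.sub_apply]
  ring

lemma mmulE_wedgeE_sub_mmulE_wedgeE (u v Z : EuclideanSpace ℝ (Fin n)) :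
    mmulE (wedgeE u Z) (wedgeE v Z) - mmulE (wedgeE v Z) (wedgeE u Z) =
      ‖Z‖ ^ 2 • wedgeE u v + ⟪u, Z⟫ • wedgeE v Z - ⟪v, Z⟫ • wedgeE u Z := by
  ext ⟨a, b⟩
  simp only [← real_inner_self_eq_norm_sq, PiLp.inner_apply, RCLike.inner_apply, conj_trivial,
    PiLp.sub_apply, PiLp.add_apply, PiLp.smul_apply, smul_eq_mul, mmulE_apply, wedgeE_apply,
    Finset.sum_mul, ← Finset.sum_sub_distrib, ← Finset.sum_add_distrib]
  exact Finset.sum_congr rfl fun k _ => by ring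

lemma wedgeE_mem_of_wedgeE_mem {𝔤 : Submodule ℝ (EuclideanSpace ℝ (Fin n × Fin n))}
    (hbracket : ∀ A ∈ 𝔤, ∀ B ∈ 𝔤, mmulE A B - mmulE B A ∈ 𝔤)
    {u v Z : EuclideanSpace ℝ (Fin n)} (hZ : Z ≠ 0)
    (hu : wedgeE u Z ∈ 𝔤) (hv : wedgeE v Z ∈ 𝔤) : wedgeE u v ∈ 𝔤 := by
  have hZ2 : ‖Z‖ ^ 2 ≠ 0 := by positivity
  have hexpr : wedgeE u v = (‖Z‖ ^ 2)⁻¹ •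
      (mmulE (wedgeE u Z) (wedgeE v Z) - mmulE (wedgeE v Z) (wedgeE u Z)
        - ⟪u, Z⟫ • wedgeE v Z + ⟪v, Z⟫ • wedgeE u Z) := by
    rw [mmulE_wedgeE_sub_mmulE_wedgeE, eq_inv_smul_iff₀ hZ2]
    abel
  rw [hexpr]
  exact 𝔤.smul_mem _ (𝔤.add_mem (𝔤.sub_mem (hbracket _ hu _ hv) (𝔤.smul_mem _ hv))
    (𝔤.smul_mem _ hu))

lemma eq_sum_wedgeE_single {A : EuclideanSpace ℝ (Fin n × Fin n)}
    (hA : ∀ i j, A (j, i) = - A (i, j)) :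
    A = ∑ i, ∑ j, (-(1 / 2) * A (i, j)) •
      wedgeE (EuclideanSpace.single i (1 : ℝ)) (EuclideanSpace.single j 1) := by
  ext ⟨a, b⟩
  simp only [one_div, neg_mul, neg_smul, Finset.sum_neg_distrib, PiLp.neg_apply, WithLp.ofLp_sum,
    WithLp.ofLp_smul, Finset.sum_apply, Pi.smul_apply, wedgeE_apply, PiLp.single_apply, mul_ite,
    mul_one, mul_zero, smul_eq_mul, mul_sub, Finset.sum_sub_distrib, Finset.sum_ite_irrel,
    Finset.sum_ite_eq, Finset.mem_univ, ↓reduceIte, Finset.sum_const_zero, neg_sub]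
  rw [hA]
  ring

lemma mem_of_wedgeE_single_mem {𝔤 : Submodule ℝ (EuclideanSpace ℝ (Fin n × Fin n))}
    (h𝔤 : ∀ i j, wedgeE (EuclideanSpace.single i (1 : ℝ)) (EuclideanSpace.single j 1) ∈ 𝔤)
    {A : EuclideanSpace ℝ (Fin n × Fin n)} (hA : ∀ i j, A (j, i) = - A (i, j)) : A ∈ 𝔤 := by
  rw [eq_sum_wedgeE_single hA]
  exact 𝔤.sum_mem fun i _ => 𝔤.sum_mem fun j _ => 𝔤.smul_mem _ (h𝔤 i j)

end

lemma Submodule.sub_mem_of_sub_orthogonalProjectionOnto_eq {E : Type*}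
    [NormedAddCommGroup E] [InnerProductSpace ℝ E] (K : Submodule ℝ E) [K.HasOrthogonalProjection]
    {v w : E} (h : v - K.orthogonalProjectionOnto v = w - K.orthogonalProjectionOnto w) :
    v - w ∈ K := by
  have : v - w = ((K.orthogonalProjectionOnto v - K.orthogonalProjectionOnto w : K) : E) := by
    rw [Submodule.coe_sub]
    linear_combination (norm := abel) h
  exact this ▸ Submodule.coe_mem _

theorem stmt1_general {n : ℕ} (𝔤 : Submodule ℝ (EuclideanSpace ℝ (Fin n × Fin n)))
    (hbracket : ∀ A ∈ 𝔤, ∀ B ∈ 𝔤, mmulE A B - mmulE B A ∈ 𝔤)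
    (hproper : ∃ A : EuclideanSpace ℝ (Fin n × Fin n),
        (∀ i j : Fin n, A (j, i) = - A (i, j)) ∧ A ∉ 𝔤) :
    Function.Injective fun X : EuclideanSpace ℝ (Fin n) =>
      fun i : Fin n =>
        wedgeE (EuclideanSpace.single i (1:ℝ)) X -
          (Submodule.orthogonalProjectionOnto 𝔤 (wedgeE (EuclideanSpace.single i (1:ℝ)) X) :
            EuclideanSpace ℝ (Fin n × Fin n)) := by
  intro X Y h
  by_contra hXY
  have hZ : X - Y ≠ 0 := sub_ne_zero.mpr hXY
  have hmem (i : Fin n) : wedgeE (EuclideanSpace.single i 1) (X - Y) ∈ 𝔤 := by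
    rw [wedgeE_sub_right]
    exact 𝔤.sub_mem_of_sub_orthogonalProjectionOnto_eq (congrFun h i)
  obtain ⟨A, hA, hA𝔤⟩ := hproper
  exact hA𝔤 (mem_of_wedgeE_single_mem
    (fun i j => wedgeE_mem_of_wedgeE_mem hbracket hZ (hmem i) (hmem j)) hA)

theorem stmt1 {n : ℕ} (𝔤 : Submodule ℝ (EuclideanSpace ℝ (Fin n × Fin n)))
    (hskew : ∀ A ∈ 𝔤, ∀ i j : Fin n, A (j, i) = - A (i, j))
    (hbracket : ∀ A ∈ 𝔤, ∀ B ∈ 𝔤, mmulE A B - mmulE B A ∈ 𝔤)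
    (hproper : ∃ A : EuclideanSpace ℝ (Fin n × Fin n),
        (∀ i j : Fin n, A (j, i) = - A (i, j)) ∧ A ∉ 𝔤) :
    Function.Injective fun X : EuclideanSpace ℝ (Fin n) =>
      fun i : Fin n =>
        wedgeE (EuclideanSpace.single i (1:ℝ)) X -
          (Submodule.orthogonalProjectionOnto 𝔤 (wedgeE (EuclideanSpace.single i (1:ℝ)) X) :
            EuclideanSpace ℝ (Fin n × Fin n)) :=
  stmt1_general 𝔤 hbracket hproper

end
end

section
/- Let T = e₅ ∧ (e₁∧e₃ − e₆∧e₇) + e₄ ∧ (e₃∧e₇ + e₁∧e₆) ∈ Λ³(ℝ⁷) (in an orthonormal basis e₁,…,e₇). Then the symmetric bilinear form S with entries S_{ij} = Σ_{m,n} T_{imn}·T_{jmn} is the diagonal matrix diag(4, 0, 4, 4, 4, 4, 4). -/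
/-!
Antisymmetry and the values on the four index triples determine `T`, so `T` is the integer
form `e₀₂₄ - e₄₅₆ + e₂₃₆ + e₀₃₅` and `S` is a finite computation. Its shape is visible from the
triples: no two of them share a pair of indices, so `S` is diagonal; each index other than `1`
lies in exactly two triples, each contributing `2` (the two orders of the remaining pair); and
`1` lies in none.
-/

section Antisymmetric

variable {α R : Type*} [InvolutiveNeg R] {T T' : α → α → α → R}

def permTriples (a b c : α) : List (α × α × α) :=
  [(a, b, c), (b, c, a), (c, a, b), (b, a, c), (a, c, b), (c, b, a)]

theorem perm_values_of_antisymm (h₁ : ∀ i j k, T i j k = -T j i k)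
    (h₂ : ∀ i j k, T i j k = -T i k j) (a b c : α) :
    T b c a = T a b c ∧ T c a b = T a b c ∧
      T b a c = -T a b c ∧ T a c b = -T a b c ∧ T c b a = -T a b c := by
  have hbca : T b c a = T a b c := by rw [h₂ b c a, h₁ b a c, neg_neg]
  have hcab : T c a b = T a b c := by rw [h₁ c a b, h₂ a c b, neg_neg]
  exact ⟨hbca, hcab, h₁ b a c, h₂ a c b, by rw [h₁ c b a, hbca]⟩

theorem eq_on_permTriples_of_antisymm (hT₁ : ∀ i j k, T i j k = -T j i k)
    (hT₂ : ∀ i j k, T i j k = -T i k j) (hT'₁ : ∀ i j k, T' i j k = -T' j i k)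
    (hT'₂ : ∀ i j k, T' i j k = -T' i k j) {a b c : α} (h : T a b c = T' a b c)
    {i j k : α} (hijk : (i, j, k) ∈ permTriples a b c) : T i j k = T' i j k := by
  obtain ⟨e₁, e₂, e₃, e₄, e₅⟩ := perm_values_of_antisymm hT₁ hT₂ a b c
  obtain ⟨e'₁, e'₂, e'₃, e'₄, e'₅⟩ := perm_values_of_antisymm hT'₁ hT'₂ a b c
  simp only [permTriples, List.mem_cons, Prod.mk.injEq, List.not_mem_nil, or_false] at hijk
  rcases hijk with ⟨rfl, rfl, rfl⟩ | ⟨rfl, rfl, rfl⟩ | ⟨rfl, rfl, rfl⟩ | ⟨rfl, rfl, rfl⟩ |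
    ⟨rfl, rfl, rfl⟩ | ⟨rfl, rfl, rfl⟩ <;>
  simp only [e₁, e₂, e₃, e₄, e₅, e'₁, e'₂, e'₃, e'₄, e'₅, h]

end Antisymmetric

/-- `(e_a ∧ e_b ∧ e_c)(e_i, e_j, e_k)`, the determinant of the Kronecker deltas expanded
along its first row. -/
def elemForm {n : ℕ} (a b c : Fin n) (i j k : Fin n) : ℤ :=
  let δ : Fin n → Fin n → ℤ := fun p q => if p = q then 1 else 0
  δ a i * (δ b j * δ c k - δ b k * δ c j) - δ a j * (δ b i * δ c k - δ b k * δ c i)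
    + δ a k * (δ b i * δ c j - δ b j * δ c i)

def torsionForm : Fin 7 → Fin 7 → Fin 7 → ℤ :=
  elemForm 0 2 4 - elemForm 4 5 6 + elemForm 2 3 6 + elemForm 0 3 5

namespace torsionForm

theorem swap₁₂ : ∀ i j k, torsionForm i j k = -torsionForm j i k := by decide +kernel

theorem swap₂₃ : ∀ i j k, torsionForm i j k = -torsionForm i k j := by decide +kernel

theorem eq_zero : ∀ i j k : Fin 7,
    ({i, j, k} : Finset (Fin 7)) ≠ {0, 2, 4} → ({i, j, k} : Finset (Fin 7)) ≠ {4, 5, 6} →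
      ({i, j, k} : Finset (Fin 7)) ≠ {2, 3, 6} → ({i, j, k} : Finset (Fin 7)) ≠ {0, 3, 5} →
        torsionForm i j k = 0 := by
  decide +kernel

theorem gram :
    Matrix.of (fun i j => ∑ m, ∑ n, torsionForm i m n * torsionForm j m n) =
      Matrix.diagonal ![4, 0, 4, 4, 4, 4, 4] := by
  decide +kernel

end torsionForm

set_option synthInstance.maxSize 1000 in
theorem fin7_triple_cases : ∀ i j k : Fin 7,
    (i, j, k) ∈ permTriples 0 2 4 ∨ (i, j, k) ∈ permTriples 4 5 6 ∨
      (i, j, k) ∈ permTriples 2 3 6 ∨ (i, j, k) ∈ permTriples 0 3 5 ∨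
      (({i, j, k} : Finset (Fin 7)) ≠ {0, 2, 4} ∧ ({i, j, k} : Finset (Fin 7)) ≠ {4, 5, 6} ∧
        ({i, j, k} : Finset (Fin 7)) ≠ {2, 3, 6} ∧ ({i, j, k} : Finset (Fin 7)) ≠ {0, 3, 5}) := by
  decide +kernel

theorem eq_torsionForm (T : Fin 7 → Fin 7 → Fin 7 → ℝ)
    (hanti1 : ∀ i j k, T i j k = -T j i k)
    (hanti2 : ∀ i j k, T i j k = -T i k j)
    (h135 : T 0 2 4 = 1) (h567 : T 4 5 6 = -1)
    (h347 : T 2 3 6 = 1) (h146 : T 0 3 5 = 1)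
    (hzero : ∀ i j k : Fin 7,
      ({i, j, k} : Finset (Fin 7)) ≠ {0, 2, 4} →
      ({i, j, k} : Finset (Fin 7)) ≠ {4, 5, 6} →
      ({i, j, k} : Finset (Fin 7)) ≠ {2, 3, 6} →
      ({i, j, k} : Finset (Fin 7)) ≠ {0, 3, 5} → T i j k = 0)
    (i j k : Fin 7) : T i j k = torsionForm i j k := by
  have hcast₁ : ∀ i j k, (torsionForm i j k : ℝ) = -torsionForm j i k := fun i j k => by
    exact_mod_cast torsionForm.swap₁₂ i j k
  have hcast₂ : ∀ i j k, (torsionForm i j k : ℝ) = -torsionForm i k j := fun i j k => by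
    exact_mod_cast torsionForm.swap₂₃ i j k
  have agree {a b c : Fin 7} {v : ℤ} (hT : T a b c = v) (hv : torsionForm a b c = v) :
      T a b c = torsionForm a b c := by
    rw [hT, hv]
  rcases fin7_triple_cases i j k with h | h | h | h | ⟨h₁, h₂, h₃, h₄⟩
  · exact eq_on_permTriples_of_antisymm hanti1 hanti2 hcast₁ hcast₂
      (agree (v := 1) (by exact_mod_cast h135) (by decide)) h
  · exact eq_on_permTriples_of_antisymm hanti1 hanti2 hcast₁ hcast₂
      (agree (v := -1) (by exact_mod_cast h567) (by decide)) h
  · exact eq_on_permTriples_of_antisymm hanti1 hanti2 hcast₁ hcast₂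
      (agree (v := 1) (by exact_mod_cast h347) (by decide)) h
  · exact eq_on_permTriples_of_antisymm hanti1 hanti2 hcast₁ hcast₂
      (agree (v := 1) (by exact_mod_cast h146) (by decide)) h
  · rw [hzero i j k h₁ h₂ h₃ h₄, torsionForm.eq_zero i j k h₁ h₂ h₃ h₄, Int.cast_zero]

theorem stmt18 (T : Fin 7 → Fin 7 → Fin 7 → ℝ)
    (hanti1 : ∀ i j k, T i j k = -T j i k)
    (hanti2 : ∀ i j k, T i j k = -T i k j)
    (h135 : T 0 2 4 = 1) (h567 : T 4 5 6 = -1)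
    (h347 : T 2 3 6 = 1) (h146 : T 0 3 5 = 1)
    (hzero : ∀ i j k : Fin 7,
      ({i, j, k} : Finset (Fin 7)) ≠ {0, 2, 4} →
      ({i, j, k} : Finset (Fin 7)) ≠ {4, 5, 6} →
      ({i, j, k} : Finset (Fin 7)) ≠ {2, 3, 6} →
      ({i, j, k} : Finset (Fin 7)) ≠ {0, 3, 5} → T i j k = 0) :
    ∀ i j : Fin 7, (∑ m, ∑ n, T i m n * T j m n) =
      Matrix.diagonal ![4, 0, 4, 4, 4, 4, 4] i j := by
  intro i j
  have hT := eq_torsionForm T hanti1 hanti2 h135 h567 h347 h146 hzero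
  have hdiag : (fun l => ((![4, 0, 4, 4, 4, 4, 4] l : ℤ) : ℝ)) = ![4, 0, 4, 4, 4, 4, 4] := by
    ext l
    fin_cases l <;> simp
  have hgram := congrArg (Matrix.map · (Int.cast : ℤ → ℝ)) torsionForm.gram
  rw [Matrix.diagonal_map Int.cast_zero, hdiag] at hgram
  simpa only [hT, Matrix.map_apply, Matrix.of_apply, Int.cast_sum, Int.cast_mul]
    using congrFun₂ hgram i j
end
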